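/- arXiv:2511.16305 — 2 statements merged into one kernel-verified Lean document; each statement's English description precedes it below -/
import Mathlib

section
/- Let g ∈ C^∞(ω̄, Sym₂⁺(ℝ²)) on the closure of a bounded, open, simply connected ω ⊂ ℝ². Suppose there exist ε > 0 and smooth w : ω̄ → ℝ, v : ω̄ → ℝ² such that the matrix field g̃ := e^{−2w} g − 2ε² ∇w⊗∇w satisfies (∇v)ᵀ∇v = g̃ on ω̄. Then the map u(x) = ε e^{w(x)} (cos(v¹(x)/ε), sin(v¹(x)/ε), cos(v²(x)/ε), sin(v²(x)/ε)) satisfies (∇u)ᵀ∇u = g on ω̄. -/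
/-- Partial derivative `∂ᵢ f` of a scalar function on `ℝ²`. -/
noncomputable def pdS (f : (Fin 2 → ℝ) → ℝ) (x : Fin 2 → ℝ) (i : Fin 2) : ℝ :=
  fderiv ℝ f x (Pi.single i 1)

/-- Entry `⟨∂ᵢu, ∂ⱼu⟩` of the induced metric `(∇u)ᵀ∇u` for `u : ℝ² → ℝ⁴`. -/
noncomputable def gram4 (u : (Fin 2 → ℝ) → (Fin 4 → ℝ)) (x : Fin 2 → ℝ) (i j : Fin 2) : ℝ :=
  ∑ k : Fin 4, fderiv ℝ u x (Pi.single i 1) k * fderiv ℝ u x (Pi.single j 1) k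

/-- Entry `⟨∂ᵢv, ∂ⱼv⟩` of the induced metric `(∇v)ᵀ∇v` for `v : ℝ² → ℝ²`. -/
noncomputable def gram2 (v : (Fin 2 → ℝ) → (Fin 2 → ℝ)) (x : Fin 2 → ℝ) (i j : Fin 2) : ℝ :=
  ∑ k : Fin 2, fderiv ℝ v x (Pi.single i 1) k * fderiv ℝ v x (Pi.single j 1) k

/-- The Poznyak ansatz `u = ε e^w (cos(v¹/ε), sin(v¹/ε), cos(v²/ε), sin(v²/ε))`. -/
noncomputable def poznyakMap (w : (Fin 2 → ℝ) → ℝ) (v : (Fin 2 → ℝ) → (Fin 2 → ℝ))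
    (ε : ℝ) : (Fin 2 → ℝ) → (Fin 4 → ℝ) :=
  fun x k => ε * Real.exp (w x) *
    ![Real.cos (v x 0 / ε), Real.sin (v x 0 / ε),
      Real.cos (v x 1 / ε), Real.sin (v x 1 / ε)] k

lemma vk_hasFDeriv (v : (Fin 2 → ℝ) → (Fin 2 → ℝ)) (hv : ContDiff ℝ (⊤ : ℕ∞) v)
    (x : Fin 2 → ℝ) (k : Fin 2) :
    HasFDerivAt (fun y => v y k)
      ((ContinuousLinearMap.proj (R := ℝ) (φ := fun _ : Fin 2 => ℝ) k).comp (fderiv ℝ v x)) x :=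
  (ContinuousLinearMap.proj (R := ℝ) (φ := fun _ : Fin 2 => ℝ) k).hasFDerivAt.comp x
    (hv.differentiable (by simp) x).hasFDerivAt

lemma fd_cos (w : (Fin 2 → ℝ) → ℝ) (v : (Fin 2 → ℝ) → (Fin 2 → ℝ))
    (hw : ContDiff ℝ (⊤ : ℕ∞) w) (hv : ContDiff ℝ (⊤ : ℕ∞) v) (ε : ℝ) (hε : ε ≠ 0)
    (x h : Fin 2 → ℝ) (k : Fin 2) :
    fderiv ℝ (fun y => ε * Real.exp (w y) * Real.cos (v y k / ε)) x h =
      ε * Real.exp (w x) * Real.cos (v x k / ε) * fderiv ℝ w x h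
        - Real.exp (w x) * Real.sin (v x k / ε) * fderiv ℝ v x h k := by
  have hdw : HasFDerivAt w (fderiv ℝ w x) x := (hw.differentiable (by simp) x).hasFDerivAt
  have hVk : HasFDerivAt (fun y => v y k / ε)
      (ε⁻¹ • ((ContinuousLinearMap.proj (R := ℝ) (φ := fun _ : Fin 2 => ℝ) k).comp
        (fderiv ℝ v x))) x := by
    simpa [div_eq_inv_mul] using (vk_hasFDeriv v hv x k).const_mul ε⁻¹
  have hA : HasFDerivAt (fun y => ε * Real.exp (w y)) (ε • (Real.exp (w x) • fderiv ℝ w x)) x :=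
    hdw.exp.const_mul ε
  have hfd := (hA.mul hVk.cos).fderiv
  rw [show (fun y => ε * Real.exp (w y) * Real.cos (v y k / ε)) =
    ((fun y => ε * Real.exp (w y)) * fun x => Real.cos (v x k / ε)) from rfl, hfd]
  simp only [ContinuousLinearMap.add_apply, ContinuousLinearMap.smul_apply,
    ContinuousLinearMap.comp_apply, ContinuousLinearMap.proj_apply, smul_eq_mul,
    ContinuousLinearMap.neg_apply]
  field_simp
  ring

lemma fd_sin (w : (Fin 2 → ℝ) → ℝ) (v : (Fin 2 → ℝ) → (Fin 2 → ℝ))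
    (hw : ContDiff ℝ (⊤ : ℕ∞) w) (hv : ContDiff ℝ (⊤ : ℕ∞) v) (ε : ℝ) (hε : ε ≠ 0)
    (x h : Fin 2 → ℝ) (k : Fin 2) :
    fderiv ℝ (fun y => ε * Real.exp (w y) * Real.sin (v y k / ε)) x h =
      ε * Real.exp (w x) * Real.sin (v x k / ε) * fderiv ℝ w x h
        + Real.exp (w x) * Real.cos (v x k / ε) * fderiv ℝ v x h k := by
  have hdw : HasFDerivAt w (fderiv ℝ w x) x := (hw.differentiable (by simp) x).hasFDerivAt
  have hVk : HasFDerivAt (fun y => v y k / ε)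
      (ε⁻¹ • ((ContinuousLinearMap.proj (R := ℝ) (φ := fun _ : Fin 2 => ℝ) k).comp
        (fderiv ℝ v x))) x := by
    simpa [div_eq_inv_mul] using (vk_hasFDeriv v hv x k).const_mul ε⁻¹
  have hA : HasFDerivAt (fun y => ε * Real.exp (w y)) (ε • (Real.exp (w x) • fderiv ℝ w x)) x :=
    hdw.exp.const_mul ε
  have hfd := (hA.mul hVk.sin).fderiv
  rw [show (fun y => ε * Real.exp (w y) * Real.sin (v y k / ε)) =
    ((fun y => ε * Real.exp (w y)) * fun x => Real.sin (v x k / ε)) from rfl, hfd]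
  simp only [ContinuousLinearMap.add_apply, ContinuousLinearMap.smul_apply,
    ContinuousLinearMap.comp_apply, ContinuousLinearMap.proj_apply, smul_eq_mul]
  field_simp
  ring

theorem stmt16 (ω : Set (Fin 2 → ℝ)) (hω : IsOpen ω) (hbd : Bornology.IsBounded ω)
    (hsc : SimplyConnectedSpace ω)
    (g : (Fin 2 → ℝ) → (Fin 2 → Fin 2 → ℝ)) (hg : ContDiff ℝ (⊤ : ℕ∞) g)
    (hgsym : ∀ x ∈ closure ω, ∀ i j, g x i j = g x j i)
    (hgpos : ∀ x ∈ closure ω, ∀ ξ : Fin 2 → ℝ, ξ ≠ 0 →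
      0 < ∑ i, ∑ j, ξ i * g x i j * ξ j)
    (ε : ℝ) (hε : 0 < ε)
    (w : (Fin 2 → ℝ) → ℝ) (v : (Fin 2 → ℝ) → (Fin 2 → ℝ))
    (hw : ContDiff ℝ (⊤ : ℕ∞) w) (hv : ContDiff ℝ (⊤ : ℕ∞) v)
    -- `(∇v)ᵀ∇v = g̃ := e^{−2w} g − 2ε² ∇w⊗∇w` on `ω̄`
    (hflat : ∀ x ∈ closure ω, ∀ i j : Fin 2,
      gram2 v x i j = Real.exp (-(2 * w x)) * g x i j - 2 * ε ^ 2 * pdS w x i * pdS w x j) :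
    ∀ x ∈ closure ω, ∀ i j : Fin 2, gram4 (poznyakMap w v ε) x i j = g x i j := by
  intro x hx i j
  have hε' : ε ≠ 0 := ne_of_gt hε
  have hdw : DifferentiableAt ℝ w x := (hw.differentiable (by simp) x)
  have hdvk : ∀ k : Fin 2, DifferentiableAt ℝ (fun y => v y k) x :=
    fun k => (vk_hasFDeriv v hv x k).differentiableAt
  have hVk : ∀ k : Fin 2, HasFDerivAt (fun y => v y k / ε)
      (ε⁻¹ • ((ContinuousLinearMap.proj (R := ℝ) (φ := fun _ : Fin 2 => ℝ) k).comp
        (fderiv ℝ v x))) x := by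
    intro k
    simpa [div_eq_inv_mul] using (vk_hasFDeriv v hv x k).const_mul ε⁻¹
  have hA : HasFDerivAt (fun y => ε * Real.exp (w y))
      (ε • (Real.exp (w x) • fderiv ℝ w x)) x := hdw.hasFDerivAt.exp.const_mul ε
  have hdc : ∀ k : Fin 2, DifferentiableAt ℝ
      (fun y => ε * Real.exp (w y) * Real.cos (v y k / ε)) x :=
    fun k => (hA.mul (hVk k).cos).differentiableAt
  have hds : ∀ k : Fin 2, DifferentiableAt ℝ
      (fun y => ε * Real.exp (w y) * Real.sin (v y k / ε)) x :=
    fun k => (hA.mul (hVk k).sin).differentiableAt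
  have hcomp : ∀ (h : Fin 2 → ℝ) (k : Fin 4),
      fderiv ℝ (poznyakMap w v ε) x h k =
      fderiv ℝ (fun y => poznyakMap w v ε y k) x h := by
    intro h k
    have hdiff : ∀ k : Fin 4, DifferentiableAt ℝ (fun y => poznyakMap w v ε y k) x := by
      intro k
      fin_cases k <;>
        simp only [poznyakMap, Matrix.cons_val_zero, Matrix.cons_val_one, Matrix.head_cons,
          Matrix.cons_val_two, Matrix.tail_cons, Matrix.cons_val_three, Fin.isValue] <;>
        first
          | exact hdc 0 | exact hds 0 | exact hdc 1 | exact hds 1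
    rw [show (poznyakMap w v ε) = (fun y k => poznyakMap w v ε y k) from rfl,
      fderiv_pi hdiff]
    rfl
  have e0c : (fun y => poznyakMap w v ε y 0) =
      (fun y => ε * Real.exp (w y) * Real.cos (v y 0 / ε)) := rfl
  have e1s : (fun y => poznyakMap w v ε y 1) =
      (fun y => ε * Real.exp (w y) * Real.sin (v y 0 / ε)) := rfl
  have e2c : (fun y => poznyakMap w v ε y 2) =
      (fun y => ε * Real.exp (w y) * Real.cos (v y 1 / ε)) := rfl
  have e3s : (fun y => poznyakMap w v ε y 3) =
      (fun y => ε * Real.exp (w y) * Real.sin (v y 1 / ε)) := rfl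
  have key := hflat x hx i j
  unfold gram2 at key
  rw [Fin.sum_univ_two] at key
  unfold gram4
  rw [Fin.sum_univ_four]
  simp only [hcomp]
  rw [e0c, e1s, e2c, e3s]
  simp only [fd_cos w v hw hv ε hε', fd_sin w v hw hv ε hε']
  set E := Real.exp (w x) with hE
  set A := fderiv ℝ w x (Pi.single i 1)
  set B := fderiv ℝ w x (Pi.single j 1)
  set P0 := fderiv ℝ v x (Pi.single i 1) 0
  set P1 := fderiv ℝ v x (Pi.single i 1) 1
  set Q0 := fderiv ℝ v x (Pi.single j 1) 0
  set Q1 := fderiv ℝ v x (Pi.single j 1) 1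
  set c0 := Real.cos (v x 0 / ε)
  set s0 := Real.sin (v x 0 / ε)
  set c1 := Real.cos (v x 1 / ε)
  set s1 := Real.sin (v x 1 / ε)
  have hp0 : s0 ^ 2 + c0 ^ 2 = 1 := Real.sin_sq_add_cos_sq _
  have hp1 : s1 ^ 2 + c1 ^ 2 = 1 := Real.sin_sq_add_cos_sq _
  have hexp : E ^ 2 * Real.exp (-(2 * w x)) = 1 := by
    rw [hE, ← Real.exp_nat_mul, ← Real.exp_add]
    norm_num
  have hAB : pdS w x i = A := rfl
  have hAB' : pdS w x j = B := rfl
  rw [hAB, hAB'] at key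
  have expand : (ε * E * c0 * A - E * s0 * P0) * (ε * E * c0 * B - E * s0 * Q0)
      + (ε * E * s0 * A + E * c0 * P0) * (ε * E * s0 * B + E * c0 * Q0)
      + (ε * E * c1 * A - E * s1 * P1) * (ε * E * c1 * B - E * s1 * Q1)
      + (ε * E * s1 * A + E * c1 * P1) * (ε * E * s1 * B + E * c1 * Q1)
      = E ^ 2 * (2 * ε ^ 2 * A * B + (P0 * Q0 + P1 * Q1)) := by
    linear_combination (ε ^ 2 * E ^ 2 * A * B + E ^ 2 * P0 * Q0) * hp0
      + (ε ^ 2 * E ^ 2 * A * B + E ^ 2 * P1 * Q1) * hp1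
  rw [expand, key]
  linear_combination (g x i j) * hexp
end

section
/- For smooth w : ℝ² → ℝ, v = (v¹,v²) : ℝ² → ℝ², and ε > 0, the map u(x) = ε e^{w(x)} (cos(v¹/ε), sin(v¹/ε), cos(v²/ε), sin(v²/ε)) : ℝ² → ℝ⁴ satisfies the pointwise identity (∇u)ᵀ∇u = e^{2w} (∇v)ᵀ∇v + 2ε² e^{2w} ∇w⊗∇w. -/
lemma compCos (w g : (Fin 2 → ℝ) → ℝ) (ε : ℝ) (x d : Fin 2 → ℝ)
    (hw : DifferentiableAt ℝ w x) (hg : DifferentiableAt ℝ g x) (hε : ε ≠ 0) :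
    fderiv ℝ (fun x => ε * Real.exp (w x) * Real.cos (g x / ε)) x d
      = Real.exp (w x) * (ε * fderiv ℝ w x d * Real.cos (g x / ε)
          - Real.sin (g x / ε) * fderiv ℝ g x d) := by
  have hdiv : fderiv ℝ (fun x => g x / ε) x = ε⁻¹ • fderiv ℝ g x := by
    simp only [div_eq_inv_mul]; rw [fderiv_const_mul hg]
  rw [fderiv_fun_mul (by fun_prop) (by fun_prop),
    fderiv_const_mul (by fun_prop : DifferentiableAt ℝ (fun x => Real.exp (w x)) x),
    fderiv_exp hw, fderiv_cos (by fun_prop), hdiv]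
  simp; field_simp; ring

lemma compSin (w g : (Fin 2 → ℝ) → ℝ) (ε : ℝ) (x d : Fin 2 → ℝ)
    (hw : DifferentiableAt ℝ w x) (hg : DifferentiableAt ℝ g x) (hε : ε ≠ 0) :
    fderiv ℝ (fun x => ε * Real.exp (w x) * Real.sin (g x / ε)) x d
      = Real.exp (w x) * (ε * fderiv ℝ w x d * Real.sin (g x / ε)
          + Real.cos (g x / ε) * fderiv ℝ g x d) := by
  have hdiv : fderiv ℝ (fun x => g x / ε) x = ε⁻¹ • fderiv ℝ g x := by
    simp only [div_eq_inv_mul]; rw [fderiv_const_mul hg]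
  rw [fderiv_fun_mul (by fun_prop) (by fun_prop),
    fderiv_const_mul (by fun_prop : DifferentiableAt ℝ (fun x => Real.exp (w x)) x),
    fderiv_exp hw, fderiv_sin (by fun_prop), hdiv]
  simp; field_simp; ring

theorem stmt17 (w : (Fin 2 → ℝ) → ℝ) (v : (Fin 2 → ℝ) → (Fin 2 → ℝ)) (ε : ℝ)
    (hw : ContDiff ℝ (⊤ : ℕ∞) w) (hv : ContDiff ℝ (⊤ : ℕ∞) v) (hε : 0 < ε) :
    ∀ x : Fin 2 → ℝ, ∀ i j : Fin 2,
      gram4 (poznyakMap w v ε) x i j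
        = Real.exp (2 * w x) * gram2 v x i j +
          2 * ε ^ 2 * Real.exp (2 * w x) * (pdS w x i * pdS w x j) := by
  intro x i j
  have hε' : ε ≠ 0 := ne_of_gt hε
  have hwx : DifferentiableAt ℝ w x := (hw.differentiable (by simp)) x
  have hvx : ∀ m : Fin 2, DifferentiableAt ℝ (fun y => v y m) x :=
    fun m => (differentiableAt_pi.mp ((hv.differentiable (by simp)) x)) m
  have hcomp : ∀ k : Fin 4, DifferentiableAt ℝ (fun y => poznyakMap w v ε y k) x := by
    intro k
    have h0 := hvx 0
    have h1 := hvx 1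
    fin_cases k <;> simp [poznyakMap] <;> fun_prop
  have hval : ∀ (d : Fin 2 → ℝ) (k : Fin 4),
      fderiv ℝ (poznyakMap w v ε) x d k = fderiv ℝ (fun y => poznyakMap w v ε y k) x d := by
    intro d k
    rw [show poznyakMap w v ε = (fun y (k : Fin 4) => poznyakMap w v ε y k) from rfl,
      fderiv_pi hcomp]
    rfl
  have hb : ∀ (m : Fin 2) (d : Fin 2 → ℝ),
      fderiv ℝ (fun y => v y m) x d = fderiv ℝ v x d m := by
    intro m d
    conv_rhs => rw [show v = (fun y (m : Fin 2) => v y m) from rfl, fderiv_pi hvx]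
    rfl
  have g0 : ∀ d, fderiv ℝ (fun y => poznyakMap w v ε y 0) x d
      = Real.exp (w x) * (ε * fderiv ℝ w x d * Real.cos (v x 0 / ε)
          - Real.sin (v x 0 / ε) * fderiv ℝ v x d 0) := by
    intro d
    rw [show (fun y => poznyakMap w v ε y 0)
        = (fun y => ε * Real.exp (w y) * Real.cos (v y 0 / ε)) from rfl,
      compCos w (fun y => v y 0) ε x d hwx (hvx 0) hε', hb 0 d]
  have g1 : ∀ d, fderiv ℝ (fun y => poznyakMap w v ε y 1) x d
      = Real.exp (w x) * (ε * fderiv ℝ w x d * Real.sin (v x 0 / ε)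
          + Real.cos (v x 0 / ε) * fderiv ℝ v x d 0) := by
    intro d
    rw [show (fun y => poznyakMap w v ε y 1)
        = (fun y => ε * Real.exp (w y) * Real.sin (v y 0 / ε)) from rfl,
      compSin w (fun y => v y 0) ε x d hwx (hvx 0) hε', hb 0 d]
  have g2 : ∀ d, fderiv ℝ (fun y => poznyakMap w v ε y 2) x d
      = Real.exp (w x) * (ε * fderiv ℝ w x d * Real.cos (v x 1 / ε)
          - Real.sin (v x 1 / ε) * fderiv ℝ v x d 1) := by
    intro d
    rw [show (fun y => poznyakMap w v ε y 2)
        = (fun y => ε * Real.exp (w y) * Real.cos (v y 1 / ε)) from rfl,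
      compCos w (fun y => v y 1) ε x d hwx (hvx 1) hε', hb 1 d]
  have g3 : ∀ d, fderiv ℝ (fun y => poznyakMap w v ε y 3) x d
      = Real.exp (w x) * (ε * fderiv ℝ w x d * Real.sin (v x 1 / ε)
          + Real.cos (v x 1 / ε) * fderiv ℝ v x d 1) := by
    intro d
    rw [show (fun y => poznyakMap w v ε y 3)
        = (fun y => ε * Real.exp (w y) * Real.sin (v y 1 / ε)) from rfl,
      compSin w (fun y => v y 1) ε x d hwx (hvx 1) hε', hb 1 d]
  simp only [gram4, gram2, pdS, Fin.sum_univ_four, Fin.sum_univ_two, hval, g0, g1, g2, g3]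
  rw [two_mul, Real.exp_add]
  have p0 := Real.sin_sq_add_cos_sq (v x 0 / ε)
  have p1 := Real.sin_sq_add_cos_sq (v x 1 / ε)
  linear_combination (Real.exp (w x) ^ 2 * (ε ^ 2 * fderiv ℝ w x (Pi.single i 1) * fderiv ℝ w x (Pi.single j 1)
      + fderiv ℝ v x (Pi.single i 1) 0 * fderiv ℝ v x (Pi.single j 1) 0)) * p0
    + (Real.exp (w x) ^ 2 * (ε ^ 2 * fderiv ℝ w x (Pi.single i 1) * fderiv ℝ w x (Pi.single j 1)
      + fderiv ℝ v x (Pi.single i 1) 1 * fderiv ℝ v x (Pi.single j 1) 1)) * p1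
end
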